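/- Let d ≥ 2 be an integer, let v₁, v₂ ∈ ℝ^d with r := |v₁ − v₂| > 0, and define the binary transition map J : ℝ^d → ℝ^d by J(ω) = r^{-1}((v₁ − v₂) + 2⟨ω, v₂ − v₁⟩ω). Then J is differentiable at every ω ∈ ℝ^d, the determinant of its derivative satisfies det DJ(ω) = 2^{d+1} r^{-d} ⟨ω, v₂ − v₁⟩^d; in particular det DJ(ω) > 0 whenever ⟨ω, v₂ − v₁⟩ > 0. Moreover, the operator norm of DJ(ω) is at most 4|ω| (hence at most 8 for |ω| ≤ 2), uniformly in v₁, v₂ and r. -/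

import Mathlib

/-!
With `s = ⟨ω, v₂ − v₁⟩`, the derivative `DJ(ω) = r⁻¹ (2s • id + 2⟨v₂ − v₁, ·⟩ ω)` is a multiple
of the identity plus a rank-one map. For `a ≠ 0`, `a • id + f(·) v` is `a` times the transvection
`x ↦ x + a⁻¹ f(x) v`, of determinant `1 + a⁻¹ f(v)`; for `a = 0` it has rank one, hence determinant
zero in dimension `≥ 2`. Here `f(v) = 2s = a`, so `det DJ(ω) = r⁻ᵈ (2s)ᵈ⁻¹ · 4s`. The norm bound is
the triangle inequality plus Cauchy–Schwarz: both terms have norm at most `2 |ω| r`.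
-/

open MeasureTheory

/-- The binary transition map `J(ω) = r⁻¹ ((v₁ − v₂) + 2⟨ω, v₂ − v₁⟩ ω)`, where `r = |v₁ − v₂|`. -/
noncomputable def transJ {d : ℕ} (v₁ v₂ : EuclideanSpace ℝ (Fin d)) :
    EuclideanSpace ℝ (Fin d) → EuclideanSpace ℝ (Fin d) :=
  fun ω => ‖v₁ - v₂‖⁻¹ • ((v₁ - v₂) + (2 * (inner ℝ ω (v₂ - v₁) : ℝ)) • ω)

open Module in
theorem LinearMap.det_smul_id_add_smulRight {K V : Type*} [Field K] [AddCommGroup V]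
    [Module K V] [FiniteDimensional K V] (hV : 1 < finrank K V) (a : K) (f : Dual K V)
    (v : V) :
    LinearMap.det (a • LinearMap.id + f.smulRight v) = a ^ (finrank K V - 1) * (a + f v) := by
  rcases eq_or_ne a 0 with rfl | ha
  · have : Nontrivial (Fin (finrank K V)) := Fin.nontrivial_iff_two_le.mpr hV
    let b := finBasis K V
    have hM : toMatrix b b (f.smulRight v) = Matrix.vecMulVec (b.repr v) (fun j => f (b j)) := by
      ext i j
      simp [toMatrix_apply, Matrix.vecMulVec_apply, mul_comm]
    rw [zero_smul, zero_add, ← det_toMatrix b, hM, Matrix.det_vecMulVec, zero_pow (by omega),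
      zero_mul]
  · have hT : a • LinearMap.id + f.smulRight v = a • transvection (a⁻¹ • f) v := by
      ext x
      simp [transvection.apply, smul_smul, ha]
    rw [hT, det_smul, transvection.det, ← Nat.sub_add_cancel hV.le, pow_succ]
    simp only [Nat.add_sub_cancel, LinearMap.smul_apply, smul_eq_mul]
    field_simp

section transJ

variable {d : ℕ} (v₁ v₂ ω : EuclideanSpace ℝ (Fin d))

noncomputable def transJDeriv : EuclideanSpace ℝ (Fin d) →L[ℝ] EuclideanSpace ℝ (Fin d) :=
  ‖v₁ - v₂‖⁻¹ • ((2 * inner ℝ ω (v₂ - v₁)) • ContinuousLinearMap.id ℝ _ +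
    ((2 : ℝ) • innerSL ℝ (v₂ - v₁)).smulRight ω)

theorem hasFDerivAt_transJ : HasFDerivAt (transJ v₁ v₂) (transJDeriv v₁ v₂ ω) ω := by
  have hinner : HasFDerivAt (fun x => inner ℝ x (v₂ - v₁)) (innerSL ℝ (v₂ - v₁)) ω :=
    (innerSL ℝ (v₂ - v₁)).hasFDerivAt.congr_of_eventuallyEq
      (.of_forall fun x => real_inner_comm _ _)
  exact (((hinner.const_mul 2).smul (hasFDerivAt_id ω)).const_add (v₁ - v₂)).const_smul
    ‖v₁ - v₂‖⁻¹

theorem det_transJDeriv (hd : 2 ≤ d) :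
    LinearMap.det (transJDeriv v₁ v₂ ω).toLinearMap =
      2 ^ (d + 1) * inner ℝ ω (v₂ - v₁) ^ d / ‖v₁ - v₂‖ ^ d := by
  have hfinrank : 1 < Module.finrank ℝ (EuclideanSpace ℝ (Fin d)) := by
    rw [finrank_euclideanSpace_fin]; omega
  rw [transJDeriv, ContinuousLinearMap.toLinearMap_smul, ContinuousLinearMap.toLinearMap_add,
    ContinuousLinearMap.toLinearMap_smul, ContinuousLinearMap.coe_id,
    ContinuousLinearMap.coe_smulRight, LinearMap.det_smul,
    LinearMap.det_smul_id_add_smulRight hfinrank, finrank_euclideanSpace_fin]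
  simp only [ContinuousLinearMap.coe_coe, smul_apply, innerSL_apply_apply,
    real_inner_comm (v₂ - v₁), smul_eq_mul]
  obtain ⟨n, rfl⟩ := Nat.exists_eq_add_of_le' (by omega : 1 ≤ d)
  simp only [Nat.add_sub_cancel, inv_pow]
  ring

theorem norm_transJDeriv_le : ‖transJDeriv v₁ v₂ ω‖ ≤ 4 * ‖ω‖ := by
  set r := ‖v₁ - v₂‖
  have hw : ‖v₂ - v₁‖ = r := norm_sub_rev _ _
  have hs : ‖2 * inner ℝ ω (v₂ - v₁)‖ ≤ 2 * (‖ω‖ * r) := by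
    rw [norm_mul, Real.norm_two, ← hw]
    gcongr
    exact norm_inner_le_norm _ _
  calc ‖transJDeriv v₁ v₂ ω‖
      ≤ r⁻¹ * (‖2 * inner ℝ ω (v₂ - v₁)‖ * 1 + 2 * r * ‖ω‖) := by
        rw [transJDeriv, norm_smul, norm_inv, norm_norm]
        gcongr
        refine (norm_add_le _ _).trans ?_
        rw [norm_smul, ContinuousLinearMap.norm_smulRight_apply]
        gcongr
        · exact ContinuousLinearMap.norm_id_le
        · rw [norm_smul, Real.norm_two, innerSL_apply_norm, hw]
    _ ≤ r⁻¹ * (2 * (‖ω‖ * r) * 1 + 2 * r * ‖ω‖) := by gcongr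
    _ = 4 * ‖ω‖ * (r⁻¹ * r) := by ring
    -- `r⁻¹ * r ≤ 1` holds also for `r = 0`, where `r⁻¹ = 0`
    _ ≤ 4 * ‖ω‖ := mul_le_of_le_one_right (by positivity) inv_mul_le_one

end transJ

theorem stmt_18_general (d : ℕ) (hd : 2 ≤ d) (v₁ v₂ : EuclideanSpace ℝ (Fin d)) :
    -- `J` is differentiable everywhere
    (∀ ω : EuclideanSpace ℝ (Fin d), DifferentiableAt ℝ (transJ v₁ v₂) ω) ∧
    -- the determinant of its derivative is `2^{d+1} r^{-d} ⟨ω, v₂ − v₁⟩^d`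
    (∀ ω : EuclideanSpace ℝ (Fin d),
      LinearMap.det ((fderiv ℝ (transJ v₁ v₂) ω).toLinearMap) =
        2 ^ (d + 1) * (inner ℝ ω (v₂ - v₁) : ℝ) ^ d / ‖v₁ - v₂‖ ^ d) ∧
    -- in particular it is positive on precollisional directions
    (∀ ω : EuclideanSpace ℝ (Fin d), 0 < (inner ℝ ω (v₂ - v₁) : ℝ) →
      0 < LinearMap.det ((fderiv ℝ (transJ v₁ v₂) ω).toLinearMap)) ∧
    -- the operator norm of the derivative is at most `4|ω|`, uniformly in `v₁, v₂, r`
    (∀ ω : EuclideanSpace ℝ (Fin d), ‖fderiv ℝ (transJ v₁ v₂) ω‖ ≤ 4 * ‖ω‖) ∧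
    -- hence at most `8` for `|ω| ≤ 2`
    (∀ ω : EuclideanSpace ℝ (Fin d), ‖ω‖ ≤ 2 → ‖fderiv ℝ (transJ v₁ v₂) ω‖ ≤ 8) := by
  have hfderiv ω : fderiv ℝ (transJ v₁ v₂) ω = transJDeriv v₁ v₂ ω :=
    (hasFDerivAt_transJ v₁ v₂ ω).fderiv
  refine ⟨fun ω => (hasFDerivAt_transJ v₁ v₂ ω).differentiableAt,
    fun ω => hfderiv ω ▸ det_transJDeriv v₁ v₂ ω hd, fun ω hω => ?_,
    fun ω => hfderiv ω ▸ norm_transJDeriv_le v₁ v₂ ω, fun ω hω => ?_⟩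
  · have hr : 0 < ‖v₁ - v₂‖ := by
      refine norm_pos_iff.mpr fun h => hω.ne' ?_
      rw [← neg_sub, h, neg_zero, inner_zero_right]
    rw [hfderiv, det_transJDeriv v₁ v₂ ω hd]
    positivity
  · rw [hfderiv]
    linarith [norm_transJDeriv_le v₁ v₂ ω]

theorem stmt_18 (d : ℕ) (hd : 2 ≤ d) (v₁ v₂ : EuclideanSpace ℝ (Fin d)) (hne : v₁ ≠ v₂) :
    -- `J` is differentiable everywhere
    (∀ ω : EuclideanSpace ℝ (Fin d), DifferentiableAt ℝ (transJ v₁ v₂) ω) ∧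
    -- the determinant of its derivative is `2^{d+1} r^{-d} ⟨ω, v₂ − v₁⟩^d`
    (∀ ω : EuclideanSpace ℝ (Fin d),
      LinearMap.det ((fderiv ℝ (transJ v₁ v₂) ω).toLinearMap) =
        2 ^ (d + 1) * (inner ℝ ω (v₂ - v₁) : ℝ) ^ d / ‖v₁ - v₂‖ ^ d) ∧
    -- in particular it is positive on precollisional directions
    (∀ ω : EuclideanSpace ℝ (Fin d), 0 < (inner ℝ ω (v₂ - v₁) : ℝ) →
      0 < LinearMap.det ((fderiv ℝ (transJ v₁ v₂) ω).toLinearMap)) ∧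
    -- the operator norm of the derivative is at most `4|ω|`, uniformly in `v₁, v₂, r`
    (∀ ω : EuclideanSpace ℝ (Fin d), ‖fderiv ℝ (transJ v₁ v₂) ω‖ ≤ 4 * ‖ω‖) ∧
    -- hence at most `8` for `|ω| ≤ 2`
    (∀ ω : EuclideanSpace ℝ (Fin d), ‖ω‖ ≤ 2 → ‖fderiv ℝ (transJ v₁ v₂) ω‖ ≤ 8) :=
  stmt_18_general d hd v₁ v₂
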